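/- Let 0 < q < 1 and let M be a deterministic program. Then BE[⟨U,h,ℓ⟩](M) ≤ q holds for all h ∈ ℍ and ℓ ∈ 𝕃 if and only if M is non-interferent, where U is the uniform belief on ℍ. -/
import Mathlib


/-!
Statement 18: Let `0 < q < 1` and let `M : ℍ × 𝕃 → 𝕆` be a deterministic
program.  Then `BE[⟨U,h,ℓ⟩](M) ≤ q` for all `h ∈ ℍ` and `ℓ ∈ 𝕃` iff `M` is
non-interferent, where `U` is the uniform belief on `ℍ`.
-/

variable {Hi Li Oi : Type*}

/-- The uniform distribution on a finite type. -/
noncomputable def unif (X : Type*) [Fintype X] : X → ℝ :=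
  fun _ => (Fintype.card X : ℝ)⁻¹

/-- Relative entropy (distance) `D(μ → μ') = Σ_h μ'(h) · log₂(μ'(h)/μ(h))`. -/
noncomputable def relD {X : Type*} [Fintype X] (μ μ' : X → ℝ) : ℝ :=
  ∑ x, μ' x * Real.logb 2 (μ' x / μ x)

/-- The point-mass distribution `ḣ` at `h`. -/
noncomputable def pointMass {X : Type*} [DecidableEq X] (h : X) : X → ℝ :=
  fun h' => if h = h' then 1 else 0

/-- The updated belief `μ|o_E`. -/
noncomputable def postBelief [Fintype Hi] [DecidableEq Oi]
    (M : Hi × Li → Oi) (μ : Hi → ℝ) (ℓE : Li) (oE : Oi) : Hi → ℝ :=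
  fun h => if M (h, ℓE) = oE then μ h / (∑ h', if M (h', ℓE) = oE then μ h' else 0) else 0

/-- Belief-based QIF `BE[⟨μ,h_E,ℓ_E⟩](M) = D(μ → ḣ_E) − D(μ|o_E → ḣ_E)`. -/
noncomputable def BE [Fintype Hi] [DecidableEq Hi] [DecidableEq Oi]
    (M : Hi × Li → Oi) (μ : Hi → ℝ) (hE : Hi) (ℓE : Li) : ℝ :=
  relD μ (pointMass hE) - relD (postBelief M μ ℓE (M (hE, ℓE))) (pointMass hE)


lemma relD_pointMass {X : Type*} [Fintype X] [DecidableEq X] (μ : X → ℝ) (h : X) :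
    relD μ (pointMass h) = Real.logb 2 (1 / μ h) := by
  unfold relD pointMass
  rw [Finset.sum_eq_single h]
  · simp
  · intro b _ hb
    simp [Ne.symm hb]
  · simp

lemma BE_unif_eq [Fintype Hi] [DecidableEq Hi] [DecidableEq Oi] [Nonempty Hi]
    (M : Hi × Li → Oi) (h : Hi) (ℓ : Li) :
    BE M (unif Hi) h ℓ = Real.logb 2 (Fintype.card Hi) -
      Real.logb 2 ((Finset.univ.filter fun h' => M (h', ℓ) = M (h, ℓ)).card) := by
  have hn : (0:ℝ) < Fintype.card Hi := by
    exact_mod_cast Fintype.card_pos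
  have hk : 0 < (Finset.univ.filter fun h' => M (h', ℓ) = M (h, ℓ)).card :=
    Finset.card_pos.mpr ⟨h, by simp⟩
  have hkR : (0:ℝ) < ((Finset.univ.filter fun h' => M (h', ℓ) = M (h, ℓ)).card : ℝ) := by
    exact_mod_cast hk
  have hS : (∑ h', if M (h', ℓ) = M (h, ℓ) then unif Hi h' else 0)
      = ((Finset.univ.filter fun h' => M (h', ℓ) = M (h, ℓ)).card : ℝ) * (Fintype.card Hi : ℝ)⁻¹ := by
    rw [← Finset.sum_filter]
    simp [unif, Finset.sum_const, nsmul_eq_mul]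
  have hpost : postBelief M (unif Hi) ℓ (M (h, ℓ)) h
      = ((Finset.univ.filter fun h' => M (h', ℓ) = M (h, ℓ)).card : ℝ)⁻¹ := by
    simp only [postBelief, if_pos rfl]
    rw [hS]
    simp only [unif, if_true]
    have hn' : (Fintype.card Hi : ℝ) ≠ 0 := hn.ne'
    have hk' : ((Finset.univ.filter fun h' => M (h', ℓ) = M (h, ℓ)).card : ℝ) ≠ 0 := hkR.ne'
    field_simp
  unfold BE
  rw [relD_pointMass, relD_pointMass, hpost]
  simp [unif]


/-- For `0 < q < 1`: `BE[⟨U,h,ℓ⟩](M) ≤ q` for all `h` and `ℓ` iff `M` is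
non-interferent. -/
theorem BE_unif_le_q_iff_noninterferent
    [Fintype Hi] [Fintype Li] [Fintype Oi] [DecidableEq Hi] [DecidableEq Oi]
    [Nonempty Hi] [Nonempty Li]
    (q : ℝ) (hq0 : 0 < q) (hq1 : q < 1) (M : Hi × Li → Oi) :
    (∀ (h : Hi) (ℓ : Li), BE M (unif Hi) h ℓ ≤ q) ↔
      (∀ (h h' : Hi) (ℓ : Li), M (h, ℓ) = M (h', ℓ)) := by
  constructor
  · intro hBE h h' ℓ
    by_contra hne
    have key : ∀ g : Hi,
        Fintype.card Hi < 2 * (Finset.univ.filter fun x => M (x, ℓ) = M (g, ℓ)).card := by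
      intro g
      have hle := hBE g ℓ
      rw [BE_unif_eq] at hle
      set k := (Finset.univ.filter fun x => M (x, ℓ) = M (g, ℓ)).card with hkdef
      have hk : 0 < k := Finset.card_pos.mpr ⟨g, by simp⟩
      have hkR : (0:ℝ) < (k : ℝ) := by exact_mod_cast hk
      have hn : (0:ℝ) < (Fintype.card Hi : ℝ) := by exact_mod_cast Fintype.card_pos
      have hlt : Real.logb 2 ((Fintype.card Hi : ℝ) / k) < 1 := by
        rw [Real.logb_div hn.ne' hkR.ne']
        exact lt_of_le_of_lt hle hq1
      have h2 := (Real.logb_lt_iff_lt_rpow (by norm_num) (by positivity)).mp hlt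
      rw [Real.rpow_one] at h2
      have h3 : (Fintype.card Hi : ℝ) < 2 * k := by
        rw [div_lt_iff₀ hkR] at h2; linarith
      exact_mod_cast h3
    have hd : Disjoint (Finset.univ.filter fun x => M (x, ℓ) = M (h, ℓ))
        (Finset.univ.filter fun x => M (x, ℓ) = M (h', ℓ)) := by
      rw [Finset.disjoint_left]
      intro x hx hx'
      simp only [Finset.mem_filter, Finset.mem_univ, true_and] at hx hx'
      exact hne (hx ▸ hx')
    have hsum : (Finset.univ.filter fun x => M (x, ℓ) = M (h, ℓ)).card +
        (Finset.univ.filter fun x => M (x, ℓ) = M (h', ℓ)).card ≤ Fintype.card Hi := by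
      rw [← Finset.card_union_of_disjoint hd]
      exact Finset.card_le_univ _
    have k1 := key h
    have k2 := key h'
    omega
  · intro hni h ℓ
    rw [BE_unif_eq]
    have huniv : (Finset.univ.filter fun h' => M (h', ℓ) = M (h, ℓ)) = Finset.univ := by
      ext x; simp [hni x h ℓ]
    rw [huniv, Finset.card_univ]
    simpa using hq0.le
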